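/- Let M be a sparse paving matroid of rank k on n elements with λ circuit-hyperplanes. Then λ ≤ min(1/(k+1), 1/(n−k+1))·(n choose k). -/

import Mathlib

open Set

variable {α : Type*}

/-- The (natural-number valued) rank of a set `X` in a matroid `M`:
the maximum cardinality of an independent subset of `X`. -/
noncomputable def Matroid.nrk (M : Matroid α) (X : Set α) : ℕ :=
  sSup (Set.ncard '' {I | M.Indep I ∧ I ⊆ X})

/-- The rank of the matroid `M`. -/
noncomputable def Matroid.nRank (M : Matroid α) : ℕ := M.nrk M.E

/-- The cusp of a subset `A` in a matroid `M` of rank `k`: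
all `k`-element subsets `S` of the ground set with `|S ∩ A| ≥ rk A + 1`. -/
def Matroid.cusp (M : Matroid α) (A : Set α) : Set (Set α) :=
  {S | S ⊆ M.E ∧ S.ncard = M.nRank ∧ M.nrk A + 1 ≤ (S ∩ A).ncard}

/-- A subset `A` of a matroid `M` is stressed if both the restriction `M | A`
and the contraction `M / A` are uniform matroids; for a finite matroid this is
equivalent to the rank functions of the restriction and of the contraction being
those of uniform matroids. -/
def Matroid.StressedSubset (M : Matroid α) (A : Set α) : Prop :=
  (∀ S ⊆ A, M.nrk S = min S.ncard (M.nrk A)) ∧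
  (∀ Y ⊆ M.E \ A, M.nrk (A ∪ Y) = M.nrk A + min Y.ncard (M.nRank - M.nrk A))

/-- A circuit of `M`: a minimal dependent set. -/
def Matroid.Circ (M : Matroid α) (C : Set α) : Prop := Minimal M.Dep C

/-- A hyperplane of `M`: a flat of rank `rk(M) − 1`. -/
def Matroid.Hyp (M : Matroid α) (H : Set α) : Prop :=
  M.IsFlat H ∧ M.nrk H + 1 = M.nRank

/-! Circuit-hyperplanes of a paving matroid of rank `k` are `k`-sets, and two distinct ones meet
in at most `k - 2` elements, since a circuit never has exactly one element outside a flat.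
So no `(k - 1)`-set lies in two of them, whence `λ k ≤ C(n, k - 1)`, i.e.
`λ (n - k + 1) ≤ C(n, k)`. Their complements (the circuit-hyperplanes of the dual) form a family
of `(n - k)`-sets with the same property, which gives `λ (k + 1) ≤ C(n, k)`. -/

open Finset FinsetFamily

namespace Finset

variable [Fintype α] [DecidableEq α] {𝒜 : Finset (Finset α)} {k : ℕ}

theorem card_mul_le_choose_pred (h𝒜 : (𝒜 : Set (Finset α)).Sized k)
    (hinter : (𝒜 : Set (Finset α)).Pairwise fun s t ↦ #(s ∩ t) + 2 ≤ k) :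
    #𝒜 * k ≤ (Fintype.card α).choose (k - 1) := by
  obtain _ | k := k
  · simp
  have hdisj : (𝒜 : Set (Finset α)).PairwiseDisjoint (powersetCard k) := by
    refine hinter.mono' fun s t hst ↦ disjoint_left.2 fun u hus hut ↦ ?_
    rw [mem_powersetCard] at hus hut
    have := card_le_card (subset_inter hus.1 hut.1)
    omega
  calc #𝒜 * (k + 1) = ∑ s ∈ 𝒜, #(s.powersetCard k) := by
        rw [sum_congr rfl fun s hs ↦ by
          rw [card_powersetCard, h𝒜 hs, Nat.choose_succ_self_right], sum_const, smul_eq_mul]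
    _ = #(𝒜.biUnion (powersetCard k)) := (card_biUnion hdisj).symm
    _ ≤ #((univ : Finset α).powersetCard k) :=
        card_le_card <| biUnion_subset.2 fun s _ ↦ powersetCard_mono (subset_univ s)
    _ = (Fintype.card α).choose (k + 1 - 1) := by simp

theorem card_mul_sub_add_one_le_choose (h𝒜 : (𝒜 : Set (Finset α)).Sized k)
    (hinter : (𝒜 : Set (Finset α)).Pairwise fun s t ↦ #(s ∩ t) + 2 ≤ k)
    (hk : 1 ≤ k) (hkn : k ≤ Fintype.card α) :
    #𝒜 * (Fintype.card α - k + 1) ≤ (Fintype.card α).choose k := by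
  set n := Fintype.card α
  have hpascal : n.choose k * k = n.choose (k - 1) * (n - k + 1) := by
    have := Nat.choose_succ_right_eq n (k - 1)
    rwa [Nat.sub_add_cancel hk, show n - (k - 1) = n - k + 1 by omega] at this
  refine Nat.le_of_mul_le_mul_right ?_ hk
  calc #𝒜 * (n - k + 1) * k = #𝒜 * k * (n - k + 1) := mul_right_comm ..
    _ ≤ n.choose (k - 1) * (n - k + 1) :=
        Nat.mul_le_mul_right _ (card_mul_le_choose_pred h𝒜 hinter)
    _ = n.choose k * k := hpascal.symm

theorem pairwise_compls (h𝒜 : (𝒜 : Set (Finset α)).Sized k)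
    (hinter : (𝒜 : Set (Finset α)).Pairwise fun s t ↦ #(s ∩ t) + 2 ≤ k) :
    (𝒜ᶜˢ : Set (Finset α)).Pairwise fun s t ↦ #(s ∩ t) + 2 ≤ Fintype.card α - k := by
  rw [coe_compls]
  rintro _ ⟨s, hs, rfl⟩ _ ⟨t, ht, rfl⟩ hst
  have hunion := card_union_add_card_inter s t
  rw [h𝒜 hs, h𝒜 ht] at hunion
  have := hinter hs ht (ne_of_apply_ne _ hst)
  have := card_le_univ (s ∪ t)
  rw [← compl_union, card_compl]
  omega

theorem card_mul_add_one_le_choose (h𝒜 : (𝒜 : Set (Finset α)).Sized k)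
    (hinter : (𝒜 : Set (Finset α)).Pairwise fun s t ↦ #(s ∩ t) + 2 ≤ k)
    (hkn : k < Fintype.card α) :
    #𝒜 * (k + 1) ≤ (Fintype.card α).choose k := by
  have := card_mul_sub_add_one_le_choose h𝒜.compls (pairwise_compls h𝒜 hinter)
    (by omega) (Nat.sub_le ..)
  rwa [card_compls, Nat.sub_sub_self hkn.le, Nat.choose_symm hkn.le] at this

end Finset

theorem Set.ncard_setOf_eq_card_filter [Fintype α] (p : Set α → Prop)
    [DecidablePred fun s : Finset α ↦ p s] :
    {C | p C}.ncard = #{s : Finset α | p s} := by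
  rw [← Set.ncard_coe_finset, coe_filter_univ]
  exact (Set.ncard_preimage_of_injective_subset_range coe_injective
    fun s _ ↦ ⟨s.toFinite.toFinset, s.toFinite.coe_toFinset⟩).symm

namespace Matroid

variable {M : Matroid α} {X I C C' F : Set α} {e : α}

-- `Circ` is definitionally Mathlib's `IsCircuit`, whose API is used directly.
theorem Circ.mem_of_sdiff_singleton_subset (hC : M.Circ C) (hF : M.IsFlat F) (he : e ∈ C)
    (hCF : C \ {e} ⊆ F) : e ∈ F :=
  hF.closure ▸ M.closure_subset_closure hCF (IsCircuit.mem_closure_sdiff_singleton_of_mem hC he)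

variable [Finite α]

theorem ncard_le_nrk (hI : M.Indep I) (hIX : I ⊆ X) : I.ncard ≤ M.nrk X :=
  le_csSup (Set.toFinite _).bddAbove ⟨I, ⟨hI, hIX⟩, rfl⟩

theorem Circ.ncard_eq_nRank_of_hyp (hpav : ∀ D, M.Dep D → M.nRank ≤ D.ncard) (hC : M.Circ C)
    (hH : M.Hyp C) : C.ncard = M.nRank := by
  obtain ⟨e, he⟩ := IsCircuit.nonempty hC
  have := ncard_le_nrk (IsCircuit.sdiff_singleton_indep hC he) sdiff_subset
  have := hH.2
  have := hpav C hC.prop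
  rw [ncard_sdiff_singleton_of_mem he] at *
  omega

theorem Circ.ncard_inter_add_two_le_nRank (hpav : ∀ D, M.Dep D → M.nRank ≤ D.ncard)
    (hC : M.Circ C) (hH : M.Hyp C) (hC' : M.Circ C') (hH' : M.Hyp C') (hne : C ≠ C') :
    (C ∩ C').ncard + 2 ≤ M.nRank := by
  have hcard := hC.ncard_eq_nRank_of_hyp hpav hH
  have hcard' := hC'.ncard_eq_nRank_of_hyp hpav hH'
  obtain ⟨e, heC', heC⟩ : (C' \ C).Nonempty := by
    rw [Set.nonempty_iff_ne_empty, Ne, sdiff_eq_empty]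
    exact fun h ↦ hne (eq_of_subset_of_ncard_le h (by omega)).symm
  by_contra! hlarge
  have hsub : C' \ {e} ⊆ C := by
    have hinter : C ∩ C' ⊆ C' \ {e} := fun x hx ↦ ⟨hx.2, fun hxe ↦ heC (hxe ▸ hx.1)⟩
    rw [← eq_of_subset_of_ncard_le hinter (by rw [ncard_sdiff_singleton_of_mem heC']; omega)]
    exact inter_subset_left
  exact heC (hC'.mem_of_sdiff_singleton_subset hH.1 heC' hsub)

theorem Circ.nRank_lt_card_of_hyp (hpav : ∀ D, M.Dep D → M.nRank ≤ D.ncard) (hC : M.Circ C)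
    (hH : M.Hyp C) : M.nRank < Nat.card α := by
  have hne : C ≠ M.E := fun h ↦ Nat.succ_ne_self _ (h ▸ hH.2)
  calc M.nRank = C.ncard := (hC.ncard_eq_nRank_of_hyp hpav hH).symm
    _ < M.E.ncard := ncard_lt_ncard (hC.prop.subset_ground.ssubset_of_ne hne)
    _ ≤ Nat.card α := ncard_le_card _

end Matroid

theorem sparse_paving_circuit_hyperplane_bound_general [Fintype α] (M : Matroid α)
    {n k lam : ℕ} (hn : Fintype.card α = n) (hk : M.nRank = k)
    (hpav : ∀ D, M.Dep D → M.nRank ≤ D.ncard)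
    (hlam : {C : Set α | M.Circ C ∧ M.Hyp C}.ncard = lam) :
    (lam : ℚ) ≤ min (1 / ((k : ℚ) + 1)) (1 / (((n - k : ℕ) : ℚ) + 1)) * n.choose k := by
  classical
  subst hn hk hlam
  rw [Set.ncard_setOf_eq_card_filter fun C ↦ M.Circ C ∧ M.Hyp C]
  set 𝒜 : Finset (Finset α) := {s | M.Circ s ∧ M.Hyp s}
  obtain h𝒜 | ⟨s₀, hs₀⟩ := 𝒜.eq_empty_or_nonempty
  · rw [h𝒜, Finset.card_empty, Nat.cast_zero]
    positivity
  obtain ⟨hC₀, hH₀⟩ := (mem_filter_univ s₀).1 hs₀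
  have hsized : (𝒜 : Set (Finset α)).Sized M.nRank := fun t ht ↦ by
    obtain ⟨htC, htH⟩ := (mem_filter_univ t).1 ht
    rw [← Set.ncard_coe_finset, htC.ncard_eq_nRank_of_hyp hpav htH]
  have hinter : (𝒜 : Set (Finset α)).Pairwise fun s t ↦ #(s ∩ t) + 2 ≤ M.nRank := by
    intro s hs t ht hst
    obtain ⟨hsC, hsH⟩ := (mem_filter_univ s).1 hs
    obtain ⟨htC, htH⟩ := (mem_filter_univ t).1 ht
    rw [← Set.ncard_coe_finset, coe_inter]
    exact hsC.ncard_inter_add_two_le_nRank hpav hsH htC htH (coe_injective.ne hst)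
  have hk : 1 ≤ M.nRank := hH₀.2 ▸ Nat.le_add_left 1 _
  have hkn : M.nRank < Fintype.card α := by simpa using hC₀.nRank_lt_card_of_hyp hpav hH₀
  rw [min_mul_of_nonneg _ _ (by positivity), one_div_mul_eq_div, one_div_mul_eq_div]
  refine le_min ?_ ?_ <;> rw [le_div_iff₀ (by positivity)] <;> norm_cast
  · exact card_mul_add_one_le_choose hsized hinter hkn
  · exact card_mul_sub_add_one_le_choose hsized hinter hk hkn.le

/-- if `M` is a sparse paving matroid (both `M` and its dual are paving)
of rank `k` on `n` elements with `λ` circuit-hyperplanes, then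
`λ ≤ min(1/(k+1), 1/(n−k+1))·(n choose k)`. -/
theorem sparse_paving_circuit_hyperplane_bound [Fintype α] (M : Matroid α)
    (hE : M.E = Set.univ) {n k lam : ℕ} (hn : Fintype.card α = n) (hk : M.nRank = k)
    (hpav : ∀ D, M.Dep D → M.nRank ≤ D.ncard)
    (hpav' : ∀ D, M✶.Dep D → M✶.nRank ≤ D.ncard)
    (hlam : {C : Set α | M.Circ C ∧ M.Hyp C}.ncard = lam) :
    (lam : ℚ) ≤ min (1 / ((k : ℚ) + 1)) (1 / (((n - k : ℕ) : ℚ) + 1)) * n.choose k :=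
  sparse_paving_circuit_hyperplane_bound_general M hn hk hpav hlam
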